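/- arXiv:1410.3948 — 4 statements merged into one kernel-verified Lean document; each statement's English description precedes it below -/
import Mathlib

section
/- For each n ≥ 0, the Tricomi polynomial t_n^{(α)}(x) = ∑_{k=0}^{n} (-1)^k C(x-α, k) x^{n-k}/(n-k)!, viewed as a polynomial in x, has degree ⌊n/2⌋. -/
/-!
Write `t_n = ∑_{k + i = n} c_{k,i} P_k X^i` with `P_k = ∏_{j<k} (X - α - j)` and
`c_{k,i} = (-1)^k / (k! i!)`. Splitting the factor `n = k + i` of `n t_n` termwise, the `i`-part
lowers the power of `X` and the `k`-part peels off a factor of `P_k`; this gives the three-term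
recurrence `(n + 2) t_{n+2} = (n + 1 + α) t_{n+1} - X t_n` with `t_0 = 1`, `t_1 = α`.
By induction, `t_{2m}` and `t_{2m+1}` have degree at most `m`, with `X^m`-coefficients
`(-1/2)^m / m!` and `(-1/2)^m / m! · (α + 2m/3)`, which are nonzero for `α > 0`.
-/

open Polynomial Finset Nat

section Recurrence

variable {K : Type*} [Field K]

noncomputable def tricomiTerm (α : K) (k i : ℕ) : K[X] :=
  C ((-1) ^ k / (k ! * i ! : K)) * (∏ j ∈ range k, (X - C (α + j))) * X ^ i

noncomputable def tricomi (α : K) (n : ℕ) : K[X] :=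
  ∑ p ∈ antidiagonal n, tricomiTerm α p.1 p.2

theorem tricomi_eq_sum_range (α : K) (n : ℕ) :
    tricomi α n = ∑ k ∈ range (n + 1),
      C ((-1) ^ k / (k ! * (n - k) ! : K)) * (∏ j ∈ range k, (X - C (α + j))) * X ^ (n - k) :=
  Nat.sum_antidiagonal_eq_sum_range_succ (tricomiTerm α) n

theorem C_mul_tricomi (α : K) (m : ℕ) :
    C (m : K) * tricomi α m =
      ∑ p ∈ antidiagonal m, C (p.1 : K) * tricomiTerm α p.1 p.2 +
        ∑ p ∈ antidiagonal m, C (p.2 : K) * tricomiTerm α p.1 p.2 := by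
  rw [tricomi, mul_sum, ← sum_add_distrib]
  refine sum_congr rfl fun p hp => ?_
  rw [← mem_antidiagonal.mp hp, cast_add, C_add]
  ring

theorem tricomi_zero (α : K) : tricomi α 0 = 1 := by
  simp [tricomi, tricomiTerm]

theorem tricomi_one (α : K) : tricomi α 1 = C α := by
  simp [tricomi, tricomiTerm, sum_antidiagonal_succ]

variable [CharZero K]

theorem C_mul_tricomiTerm_succ_right (α : K) (k i : ℕ) :
    C ((i : K) + 1) * tricomiTerm α k (i + 1) = X * tricomiTerm α k i := by
  have hcoeff :
      ((i : K) + 1) * ((-1) ^ k / (k ! * (i + 1)! : K)) = (-1) ^ k / (k ! * i ! : K) := by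
    push_cast [factorial_succ]
    field_simp
  simp only [tricomiTerm, ← hcoeff, C_mul, pow_succ]
  ring

theorem C_mul_tricomiTerm_succ_left (α : K) (k i : ℕ) :
    C ((k : K) + 1) * tricomiTerm α (k + 1) i = -(tricomiTerm α k i * (X - C (α + k))) := by
  have hcoeff : ((k : K) + 1) * ((-1) ^ (k + 1) / ((k + 1)! * i ! : K)) =
      -((-1) ^ k / (k ! * i ! : K)) := by
    push_cast [factorial_succ]
    field_simp
    ring
  have hC := congrArg C hcoeff
  rw [C_mul, C_neg] at hC
  rw [tricomiTerm, tricomiTerm, prod_range_succ]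
  linear_combination ((∏ j ∈ range k, (X - C (α + j))) * (X - C (α + k)) * X ^ i) * hC

theorem sum_C_mul_tricomiTerm_right (α : K) (m : ℕ) :
    ∑ p ∈ antidiagonal (m + 1), C (p.2 : K) * tricomiTerm α p.1 p.2 = X * tricomi α m := by
  rw [sum_antidiagonal_succ', tricomi, mul_sum]
  simp only [CharP.cast_eq_zero, C_0, zero_mul, zero_add, cast_add, cast_one,
    C_mul_tricomiTerm_succ_right]

theorem sum_C_mul_tricomiTerm_left (α : K) (m : ℕ) :
    ∑ p ∈ antidiagonal (m + 1), C (p.1 : K) * tricomiTerm α p.1 p.2 =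
      -∑ p ∈ antidiagonal m, tricomiTerm α p.1 p.2 * (X - C (α + p.1)) := by
  rw [sum_antidiagonal_succ, ← sum_neg_distrib]
  simp only [CharP.cast_eq_zero, C_0, zero_mul, zero_add, cast_add, cast_one,
    C_mul_tricomiTerm_succ_left]

theorem tricomi_recurrence (α : K) (n : ℕ) :
    C ((n : K) + 2) * tricomi α (n + 2) =
      C ((n : K) + 1 + α) * tricomi α (n + 1) - X * tricomi α n := by
  have h₁ := C_mul_tricomi α (n + 1)
  have h₂ := C_mul_tricomi α (n + 2)
  rw [sum_C_mul_tricomiTerm_right] at h₁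
  rw [sum_C_mul_tricomiTerm_right, sum_C_mul_tricomiTerm_left] at h₂
  have hsplit : ∑ p ∈ antidiagonal (n + 1), tricomiTerm α p.1 p.2 * (X - C (α + p.1)) =
      (X - C α) * tricomi α (n + 1) -
        ∑ p ∈ antidiagonal (n + 1), C (p.1 : K) * tricomiTerm α p.1 p.2 := by
    rw [tricomi, mul_sum, ← sum_sub_distrib]
    refine sum_congr rfl fun p _ => ?_
    rw [C_add]
    ring
  push_cast at h₁ h₂ ⊢
  rw [hsplit] at h₂
  simp only [C_add, C_1, C_ofNat] at h₁ h₂ ⊢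
  linear_combination h₂ - h₁

end Recurrence

theorem natDegree_le_and_coeff_of_C_mul_eq {K : Type*} [Field K] {a c : K} {p q r : K[X]} {d : ℕ}
    (hc : c ≠ 0) (h : C c * r = C a * p - X * q) (hp : p.natDegree ≤ d + 1)
    (hq : q.natDegree ≤ d) :
    r.natDegree ≤ d + 1 ∧ r.coeff (d + 1) = (a * p.coeff (d + 1) - q.coeff d) / c := by
  have hcoeff : r.coeff (d + 1) * c = a * p.coeff (d + 1) - q.coeff d := by
    rw [mul_comm]
    simpa only [coeff_C_mul, coeff_sub, coeff_X_mul] using congrArg (coeff · (d + 1)) h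
  refine ⟨?_, eq_div_of_mul_eq hc hcoeff⟩
  rw [← natDegree_C_mul hc, h]
  refine (natDegree_sub_le _ _).trans (max_le ((natDegree_C_mul_le _ _).trans hp) ?_)
  exact natDegree_mul_le.trans (by rw [natDegree_X]; omega)

theorem natDegree_tricomi_le_and_coeff {K : Type*} [Field K] [CharZero K] (α : K) (m : ℕ) :
    ((tricomi α (2 * m)).natDegree ≤ m ∧
        (tricomi α (2 * m)).coeff m = (-2⁻¹) ^ m / m !) ∧
      ((tricomi α (2 * m + 1)).natDegree ≤ m ∧
        (tricomi α (2 * m + 1)).coeff m = (-2⁻¹) ^ m / m ! * (α + 2 * m / 3)) := by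
  induction m with
  | zero => simp [tricomi_zero, tricomi_one]
  | succ m ih =>
    obtain ⟨⟨hdeg₀, hcoeff₀⟩, hdeg₁, hcoeff₁⟩ := ih
    obtain ⟨hdeg₂, hcoeff₂⟩ := natDegree_le_and_coeff_of_C_mul_eq (by norm_cast)
      (tricomi_recurrence α (2 * m)) (hdeg₁.trans m.le_succ) hdeg₀
    obtain ⟨hdeg₃, hcoeff₃⟩ := natDegree_le_and_coeff_of_C_mul_eq (by norm_cast)
      (tricomi_recurrence α (2 * m + 1)) hdeg₂ hdeg₁
    rw [coeff_eq_zero_of_natDegree_lt (hdeg₁.trans_lt m.lt_succ_self)] at hcoeff₂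
    rw [show 2 * (m + 1) = 2 * m + 2 by ring, hcoeff₂, hcoeff₀]
    rw [show 2 * m + 1 + 2 = 2 * m + 2 + 1 by ring] at hdeg₃ hcoeff₃
    refine ⟨⟨hdeg₂, ?_⟩, hdeg₃, ?_⟩
    · push_cast [factorial_succ, pow_succ]
      field_simp
      ring
    · have hne : (2 * m + 1 + 2 : K) ≠ 0 := by norm_cast
      rw [hcoeff₃, hcoeff₂, hcoeff₀, hcoeff₁]
      push_cast [factorial_succ, pow_succ]
      field_simp
      ring

theorem natDegree_tricomi (α : ℝ) (hα : 0 < α) (n : ℕ) :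
    (tricomi α n).natDegree = n / 2 := by
  obtain ⟨m, rfl | rfl⟩ := n.even_or_odd'
  · obtain ⟨⟨hdeg, hcoeff⟩, -⟩ := natDegree_tricomi_le_and_coeff α m
    rw [show 2 * m / 2 = m by omega]
    exact natDegree_eq_of_le_of_coeff_ne_zero hdeg (by rw [hcoeff]; positivity)
  · obtain ⟨-, hdeg, hcoeff⟩ := natDegree_tricomi_le_and_coeff α m
    rw [show (2 * m + 1) / 2 = m by omega]
    exact natDegree_eq_of_le_of_coeff_ne_zero hdeg (by rw [hcoeff]; positivity)

/-- The Tricomi polynomial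
`t_n^{(α)}(x) = ∑_{k=0}^{n} (-1)^k C(x-α, k) x^{n-k}/(n-k)!`,
viewed as a polynomial in `x` (where `C(x-α,k) = (x-α)(x-α-1)⋯(x-α-k+1)/k!`),
has degree `⌊n/2⌋`. -/
theorem tricomi_polynomial_degree (α : ℝ) (hα : 0 < α) (n : ℕ) :
    (∑ k ∈ Finset.range (n + 1),
        Polynomial.C ((-1 : ℝ) ^ k / ((k.factorial : ℝ) * ((n - k).factorial : ℝ)))
          * (∏ j ∈ Finset.range k, (Polynomial.X - Polynomial.C (α + (j : ℝ))))
          * Polynomial.X ^ (n - k)).natDegree = n / 2 := by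
  rw [← tricomi_eq_sum_range, natDegree_tricomi α hα]
end

section
/- The function ψ(x), defined for |x| ≤ 2 by ψ(x) = (1/π)( 4 arctan(|x|/√(4-x²))/|x|³ − √(4-x²)/x² ) and for |x| > 2 by ψ(x) = 2/|x|³, is nonnegative on ℝ \ {0} and integrates to 1 over ℝ: ∫_{-∞}^{∞} ψ(x) dx = 1. -/
open Real MeasureTheory

/-- The equilibrium density for the rescaled Tricomi-Carlitz polynomials. -/
noncomputable def psiTC (x : ℝ) : ℝ :=
  if |x| < 2 then
    (1 / π) * (4 * Real.arctan (|x| / Real.sqrt (4 - x ^ 2)) / |x| ^ 3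
      - Real.sqrt (4 - x ^ 2) / x ^ 2)
  else 2 / |x| ^ 3

/-!
On `(0, 2)` the density is `ψ x = N x / (π x³)` with `N x = 4 arcsin (x / 2) - x √(4 - x²)`.
Since `N 0 = 0` and `N' x = 2 x² / √(4 - x²) ≥ 0`, `ψ` is nonnegative there. The function
`(arcsin (x / 2) - N x / (2 x²)) / π` is a primitive of `ψ` on `(0, 2)`; by L'Hôpital it tends
to `0` at `0⁺`, and it equals `1 / 4` at `2`. The tail `2 / x³` contributes another `1 / 4` on
`(2, ∞)`, and `ψ` is even, so the total mass is `2 (1 / 4 + 1 / 4) = 1`.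
-/

open Set Filter Topology

lemma psiTC_abs (x : ℝ) : psiTC |x| = psiTC x := by
  simp only [psiTC, abs_abs, sq_abs]

lemma sqrt_one_sub_half_sq (x : ℝ) : √(1 - (x / 2) ^ 2) = √(4 - x ^ 2) / 2 := by
  rw [show 1 - (x / 2) ^ 2 = (4 - x ^ 2) / 2 ^ 2 by ring, sqrt_div' _ (by positivity),
    sqrt_sq zero_le_two]

lemma hasDerivAt_arcsin_half {x : ℝ} (hx : x ∈ Ioo (-2) 2) :
    HasDerivAt (fun y => arcsin (y / 2)) (1 / √(4 - x ^ 2)) x := by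
  have h := (hasDerivAt_arcsin (x := x / 2) (by linarith [hx.1]) (by linarith [hx.2])).comp x
    ((hasDerivAt_id x).div_const 2)
  refine h.congr_deriv ?_
  rw [sqrt_one_sub_half_sq]
  field_simp

noncomputable def psiNum (x : ℝ) : ℝ := 4 * arcsin (x / 2) - x * √(4 - x ^ 2)

lemma psiNum_zero : psiNum 0 = 0 := by
  simp [psiNum]

lemma continuous_psiNum : Continuous psiNum := by
  unfold psiNum
  fun_prop

lemma hasDerivAt_psiNum {x : ℝ} (hx : x ∈ Ioo (-2) 2) :
    HasDerivAt psiNum (2 * x ^ 2 / √(4 - x ^ 2)) x := by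
  have h4 : 0 < 4 - x ^ 2 := by nlinarith [hx.1, hx.2]
  have hs : 0 < √(4 - x ^ 2) := sqrt_pos.2 h4
  have hsq := sq_sqrt h4.le
  have h := ((hasDerivAt_arcsin_half hx).const_mul 4).sub ((hasDerivAt_id' x).mul
    (((hasDerivAt_pow 2 x).const_sub 4).sqrt h4.ne'))
  refine h.congr_deriv ?_
  field_simp
  linear_combination -2 * hsq

lemma psiNum_nonneg {x : ℝ} (hx : x ∈ Icc 0 2) : 0 ≤ psiNum x := by
  have hmono : MonotoneOn psiNum (Icc 0 2) := by
    refine monotoneOn_of_hasDerivWithinAt_nonneg (f' := fun y => 2 * y ^ 2 / √(4 - y ^ 2))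
      (convex_Icc 0 2) continuous_psiNum.continuousOn (fun y hy => ?_) (fun y _ => by positivity)
    rw [interior_Icc] at hy
    exact (hasDerivAt_psiNum ⟨by linarith [hy.1], hy.2⟩).hasDerivWithinAt
  simpa [psiNum_zero] using hmono ⟨le_rfl, zero_le_two⟩ hx hx.1

lemma psiTC_eq_psiNum_div {x : ℝ} (hx : x ∈ Ioo 0 2) : psiTC x = psiNum x / (π * x ^ 3) := by
  have habs : |x| = x := abs_of_pos hx.1
  have harctan : arctan (x / √(4 - x ^ 2)) = arcsin (x / 2) := by
    rw [arcsin_eq_arctan ⟨by linarith [hx.1], by linarith [hx.2]⟩, sqrt_one_sub_half_sq]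
    congr 1
    field_simp
  rw [psiTC, if_pos (by rw [habs]; exact hx.2), habs, harctan, psiNum]
  field_simp

lemma psiTC_nonneg {x : ℝ} (hx : x ≠ 0) : 0 ≤ psiTC x := by
  rw [← psiTC_abs]
  rcases lt_or_ge |x| 2 with h2 | h2
  · rw [psiTC_eq_psiNum_div ⟨abs_pos.2 hx, h2⟩]
    exact div_nonneg (psiNum_nonneg ⟨abs_nonneg x, h2.le⟩) (by positivity)
  · rw [psiTC, if_neg (by rwa [abs_abs, not_lt])]
    positivity

/-- A primitive of `psiTC` on `(0, 2)`; at `0` the junk value `0 / 0 = 0` gives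
`psiPrimitive 0 = 0`, which is also its right limit. -/
noncomputable def psiPrimitive (x : ℝ) : ℝ := (arcsin (x / 2) - psiNum x / (2 * x ^ 2)) / π

lemma psiPrimitive_zero : psiPrimitive 0 = 0 := by
  simp [psiPrimitive]

lemma psiPrimitive_two : psiPrimitive 2 = 1 / 4 := by
  have hnum : psiNum 2 = 2 * π := by norm_num [psiNum]; ring
  rw [psiPrimitive, hnum, div_self two_ne_zero, arcsin_one]
  field_simp
  ring

lemma hasDerivAt_psiPrimitive {x : ℝ} (hx : x ∈ Ioo 0 2) :
    HasDerivAt psiPrimitive (psiTC x) x := by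
  have hx' : x ∈ Ioo (-2) 2 := ⟨by linarith [hx.1], hx.2⟩
  have h := ((hasDerivAt_arcsin_half hx').sub ((hasDerivAt_psiNum hx').div
    ((hasDerivAt_pow 2 x).const_mul 2) (by have := hx.1; positivity))).div_const π
  refine h.congr_deriv ?_
  have hs : 0 < √(4 - x ^ 2) := sqrt_pos.2 (by nlinarith [hx.1, hx.2])
  have hx0 : x ≠ 0 := hx.1.ne'
  rw [psiTC_eq_psiNum_div hx]
  field_simp
  ring

lemma tendsto_psiNum_div_sq : Tendsto (fun x => psiNum x / (2 * x ^ 2)) (𝓝[>] 0) (𝓝 0) := by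
  refine HasDerivAt.lhopital_zero_right_on_Ioo (f' := fun x => 2 * x ^ 2 / √(4 - x ^ 2))
    (g' := fun x => 2 * (2 * x)) two_pos
    (fun x hx => hasDerivAt_psiNum ⟨by linarith [hx.1], hx.2⟩)
    (fun x _ => by simpa using (hasDerivAt_pow 2 x).const_mul 2)
    (fun x hx => by have := hx.1; positivity) ?_ ?_ ?_
  · simpa [psiNum_zero] using continuous_psiNum.continuousWithinAt.tendsto (s := Ioi 0) (x := 0)
  · have h : Continuous fun x : ℝ => 2 * x ^ 2 := by fun_prop
    simpa using h.continuousWithinAt.tendsto (s := Ioi 0) (x := 0)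
  · have hc : ContinuousAt (fun x : ℝ => x / (2 * √(4 - x ^ 2))) 0 := by
      fun_prop (disch := norm_num)
    have hlim : Tendsto (fun x : ℝ => x / (2 * √(4 - x ^ 2))) (𝓝[>] 0) (𝓝 0) := by
      simpa using hc.tendsto.mono_left nhdsWithin_le_nhds
    refine hlim.congr' ?_
    filter_upwards [self_mem_nhdsWithin] with x (hx : 0 < x)
    field_simp

lemma continuousOn_psiPrimitive : ContinuousOn psiPrimitive (Icc 0 2) := by
  intro x hx
  rcases hx.1.eq_or_lt with rfl | hpos
  · refine (continuousWithinAt_Ioi_iff_Ici.1 ?_).mono Icc_subset_Ici_self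
    have harcsin : Tendsto (fun x => arcsin (x / 2)) (𝓝[>] 0) (𝓝 0) := by
      have h : Continuous fun x => arcsin (x / 2) := by fun_prop
      simpa using h.continuousWithinAt.tendsto (s := Ioi 0) (x := 0)
    have h := (harcsin.sub tendsto_psiNum_div_sq).div_const π
    rw [sub_zero, zero_div] at h
    rwa [ContinuousWithinAt, psiPrimitive_zero]
  · exact ((continuous_arcsin.comp (continuous_id.div_const 2)).continuousAt.sub
      (continuous_psiNum.continuousAt.div (by fun_prop) (by positivity))).div_const π
      |>.continuousWithinAt

lemma integrableOn_psiTC_Ioc : IntegrableOn psiTC (Ioc 0 2) :=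
  intervalIntegral.integrableOn_deriv_of_nonneg continuousOn_psiPrimitive
    (fun _ hx => hasDerivAt_psiPrimitive hx) (fun _ hx => psiTC_nonneg hx.1.ne')

lemma integral_psiTC_Ioc : ∫ x in Ioc 0 2, psiTC x = 1 / 4 := by
  rw [← intervalIntegral.integral_of_le zero_le_two,
    intervalIntegral.integral_eq_sub_of_hasDeriv_right_of_le zero_le_two continuousOn_psiPrimitive
      (fun _ hx => (hasDerivAt_psiPrimitive hx).hasDerivWithinAt)
      ((intervalIntegrable_iff_integrableOn_Ioc_of_le zero_le_two).2 integrableOn_psiTC_Ioc),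
    psiPrimitive_two, psiPrimitive_zero, sub_zero]

lemma psiTC_eqOn_Ioi : EqOn psiTC (fun x => 2 * x ^ (-3 : ℝ)) (Ioi 2) := by
  intro x hx
  have habs : |x| = x := abs_of_pos (two_pos.trans hx)
  rw [psiTC, if_neg (by rw [habs]; exact not_lt.2 (le_of_lt hx)), habs]
  show 2 / x ^ 3 = 2 * x ^ (-3 : ℝ)
  rw [rpow_neg (by linarith [hx.out]), div_eq_mul_inv]
  norm_cast

lemma integrableOn_psiTC_Ioi : IntegrableOn psiTC (Ioi 2) :=
  IntegrableOn.congr_fun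
    ((integrableOn_Ioi_rpow_of_lt (a := -3) (by norm_num) two_pos).const_mul 2)
    psiTC_eqOn_Ioi.symm measurableSet_Ioi

lemma integral_psiTC_Ioi : ∫ x in Ioi 2, psiTC x = 1 / 4 := by
  rw [setIntegral_congr_fun measurableSet_Ioi psiTC_eqOn_Ioi, integral_const_mul,
    integral_Ioi_rpow_of_lt (by norm_num) two_pos]
  norm_num

lemma integral_psiTC_Ioi_zero : ∫ x in Ioi 0, psiTC x = 1 / 2 := by
  rw [← Ioc_union_Ioi_eq_Ioi zero_le_two,
    setIntegral_union (Ioc_disjoint_Ioi le_rfl) measurableSet_Ioi integrableOn_psiTC_Ioc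
      integrableOn_psiTC_Ioi, integral_psiTC_Ioc, integral_psiTC_Ioi]
  norm_num

/-- The equilibrium density `ψ` is nonnegative on `ℝ \ {0}` and integrates to `1` over `ℝ`. -/
theorem psiTC_nonneg_and_integral_one :
    (∀ x : ℝ, x ≠ 0 → 0 ≤ psiTC x) ∧ ∫ x : ℝ, psiTC x = 1 := by
  refine ⟨fun _ hx => psiTC_nonneg hx, ?_⟩
  calc ∫ x, psiTC x = ∫ x, psiTC |x| := by simp only [psiTC_abs]
    _ = 2 * ∫ x in Ioi 0, psiTC x := integral_comp_abs
    _ = 1 := by rw [integral_psiTC_Ioi_zero]; norm_num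
end

section
/- For x ∈ (0, 2), the equilibrium density satisfies the strict upper constraint ψ(x) < 2/x³. -/
open Real

theorem four_mul_arctan_sub_lt_two_pi (y : ℝ) {s : ℝ} (hs : 0 ≤ s) :
    4 * arctan y - s < 2 * π := by
  linarith [arctan_lt_pi_div_two y]

theorem psi_strict_upper_constraint_general (x : ℝ) (hx0 : 0 < x) :
    (1 / π) * (4 * Real.arctan (x / Real.sqrt (4 - x ^ 2)) / x ^ 3
      - Real.sqrt (4 - x ^ 2) / x ^ 2) < 2 / x ^ 3 := by
  set A := 4 * arctan (x / √(4 - x ^ 2))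
  have hbound : A - x * √(4 - x ^ 2) < 2 * π :=
    four_mul_arctan_sub_lt_two_pi _ (by positivity)
  have hψ : (1 / π) * (A / x ^ 3 - √(4 - x ^ 2) / x ^ 2)
      = (A - x * √(4 - x ^ 2)) / π / x ^ 3 := by
    field_simp
  rw [hψ]
  gcongr
  rw [div_lt_iff₀ pi_pos]
  exact hbound

/-- For `x ∈ (0, 2)`, the equilibrium density satisfies the strict upper constraint
`ψ(x) < 2/x³`. -/
theorem psi_strict_upper_constraint (x : ℝ) (hx0 : 0 < x) (hx2 : x < 2) :
    (1 / π) * (4 * Real.arctan (x / Real.sqrt (4 - x ^ 2)) / x ^ 3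
      - Real.sqrt (4 - x ^ 2) / x ^ 2) < 2 / x ^ 3 :=
  psi_strict_upper_constraint_general x hx0
end

section
/- For real x > 2, the function φ̃(x) = (2/x²) log(x+√(x²−4)) − log(x+√(x²−4)) + (1 − 2/x²) log 2 + √(x²−4)/(2x) is real and strictly negative. -/
/-!
Substitute `x = 2 cosh t` with `t > 0`. Then `√(x² - 4) = 2 sinh t` and `x + √(x² - 4) = 2 eᵗ`,
so that `2 cosh² t · φ̃(x) = sinh t cosh t - t (2 cosh² t - 1)`. This is negative since
`sinh t < t cosh t` (the derivative of `t cosh t - sinh t` is `t sinh t > 0`) and `cosh t ≥ 1`.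
-/

open Real

theorem Real.sinh_lt_mul_cosh {t : ℝ} (ht : 0 < t) : sinh t < t * cosh t := by
  have hderiv : ∀ u, HasDerivAt (fun u => u * cosh u - sinh u) (u * sinh u) u := fun u =>
    (((hasDerivAt_id' u).mul (hasDerivAt_cosh u)).sub (hasDerivAt_sinh u)).congr_deriv (by ring)
  have hmono : StrictMonoOn (fun u => u * cosh u - sinh u) (Set.Ici 0) := by
    refine strictMonoOn_of_deriv_pos (convex_Ici 0) ?_ fun u hu => ?_
    · exact (continuous_id.mul continuous_cosh |>.sub continuous_sinh).continuousOn
    · rw [interior_Ici, Set.mem_Ioi] at hu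
      rw [(hderiv u).deriv]
      exact mul_pos hu (sinh_pos_iff.mpr hu)
  have := hmono Set.self_mem_Ici ht.le ht
  simp only [zero_mul, sinh_zero, sub_zero] at this
  linarith

theorem Real.sqrt_two_mul_cosh_sq_sub_four {t : ℝ} (ht : 0 ≤ t) :
    √((2 * cosh t) ^ 2 - 4) = 2 * sinh t := by
  rw [show (2 * cosh t) ^ 2 - 4 = (2 * sinh t) ^ 2 by rw [mul_pow, mul_pow, cosh_sq]; ring]
  exact sqrt_sq (by positivity)

/-- For real `x > 2`, the function
`φ̃(x) = (2/x²) log(x+√(x²−4)) − log(x+√(x²−4)) + (1 − 2/x²) log 2 + √(x²−4)/(2x)`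
is strictly negative. -/
theorem phiTilde_neg_on_saturated (x : ℝ) (hx : 2 < x) :
    2 / x ^ 2 * Real.log (x + Real.sqrt (x ^ 2 - 4))
      - Real.log (x + Real.sqrt (x ^ 2 - 4))
      + (1 - 2 / x ^ 2) * Real.log 2
      + Real.sqrt (x ^ 2 - 4) / (2 * x) < 0 := by
  obtain ⟨t, ht, rfl⟩ : ∃ t, 0 < t ∧ 2 * cosh t = x :=
    ⟨arcosh (x / 2), arcosh_pos (by linarith), by rw [cosh_arcosh (by linarith)]; ring⟩
  have hlog : Real.log (2 * cosh t + 2 * sinh t) = Real.log 2 + t := by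
    rw [← mul_add, cosh_add_sinh, Real.log_mul two_ne_zero (exp_pos t).ne', log_exp]
  rw [sqrt_two_mul_cosh_sq_sub_four ht.le, hlog]
  have hc := cosh_pos t
  have hform : 2 / (2 * cosh t) ^ 2 * (Real.log 2 + t) - (Real.log 2 + t)
      + (1 - 2 / (2 * cosh t) ^ 2) * Real.log 2 + 2 * sinh t / (2 * (2 * cosh t))
      = (sinh t * cosh t - t * (2 * cosh t ^ 2 - 1)) / (2 * cosh t ^ 2) := by
    field_simp
    ring
  have hkey : sinh t * cosh t < t * (2 * cosh t ^ 2 - 1) :=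
    calc sinh t * cosh t < t * cosh t * cosh t := by gcongr; exact sinh_lt_mul_cosh ht
      _ ≤ t * (2 * cosh t ^ 2 - 1) := by
        nlinarith [one_le_cosh t, mul_le_mul_of_nonneg_left (one_le_cosh t) ht.le]
  rw [hform]
  exact div_neg_of_neg_of_pos (sub_neg.mpr hkey) (by positivity)
end
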